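/- For each n ≥ 1, let W_{n,1}, …, W_{n,n} be nonnegative identically distributed random variables on a common probability space (no independence is assumed). Suppose that lim_{t_0 → ∞} limsup_{n → ∞} sup_{t ≥ t_0} t² P(W_{n,1} ≥ t) = 0. Then n^{-1/2} E[max_{1≤i≤n} W_{n,i}] → 0 as n → ∞. -/

import Mathlib

/-!
Layer cake: `E[max_i W_{n,i}] = ∫₀^∞ P(max ≥ t) dt ≤ T + n ∫_T^∞ P(W_{n,1} ≥ t) dt`, by the union
bound and identical distribution. If `t² P(W_{n,1} ≥ t) ≤ S` for `t ≥ T`, the tail integral is at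
most `S / T`, so `E[max] ≤ T + n S / T`. Taking `T = η √n`, the hypothesis makes `S ≤ η²` for large
`n` (as `T → ∞`), whence `E[max] ≤ 2 η √n`.
-/

open MeasureTheory ProbabilityTheory ENNReal Filter Set

noncomputable section

variable {Ω ι : Type*} [MeasurableSpace Ω] {μ : Measure Ω} [Fintype ι] {W : ι → Ω → ℝ} {i₀ : ι}

def tailSup (μ : Measure Ω) (X : Ω → ℝ) (T : ℝ) : ℝ≥0∞ :=
  ⨆ t ∈ Ici T, ENNReal.ofReal (t ^ 2) * μ {ω | t ≤ X ω}

lemma tailSup_anti (X : Ω → ℝ) : Antitone (tailSup μ X) :=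
  fun _ _ hST => biSup_mono fun _ ht => le_trans hST ht

lemma le_tailSup {X : Ω → ℝ} {T t : ℝ} (ht : T ≤ t) :
    ENNReal.ofReal (t ^ 2) * μ {ω | t ≤ X ω} ≤ tailSup μ X T :=
  le_iSup₂ (f := fun t (_ : t ∈ Ici T) => ENNReal.ofReal (t ^ 2) * μ {ω | t ≤ X ω}) t ht

lemma measure_ge_le_tailSup_div {X : Ω → ℝ} {T t : ℝ} (hT : 0 < T) (ht : T ≤ t) :
    μ {ω | t ≤ X ω} ≤ tailSup μ X T / ENNReal.ofReal (t ^ 2) := by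
  have ht2 : ENNReal.ofReal (t ^ 2) ≠ 0 := by
    have := hT.trans_le ht
    rw [Ne, ENNReal.ofReal_eq_zero, not_le]; positivity
  rw [ENNReal.le_div_iff_mul_le (Or.inl ht2) (Or.inl ofReal_ne_top), mul_comm]
  exact le_tailSup ht

lemma natCast_mul_ofReal_sq_div_ofReal_mul_sqrt {η : ℝ} (hη : 0 < η) {m : ℕ} (hm : 0 < m) :
    m * ENNReal.ofReal (η ^ 2) / ENNReal.ofReal (η * √m) = ENNReal.ofReal (η * √m) := by
  have hm' : (0 : ℝ) < m := Nat.cast_pos.2 hm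
  rw [← ofReal_natCast, ← ENNReal.ofReal_mul hm'.le, ← ENNReal.ofReal_div_of_pos (by positivity)]
  congr 1
  field_simp
  rw [Real.sq_sqrt hm'.le]

lemma lintegral_Ioi_inv_sq {T : ℝ} (hT : 0 < T) :
    ∫⁻ t in Ioi T, (ENNReal.ofReal (t ^ 2))⁻¹ = (ENNReal.ofReal T)⁻¹ := by
  have hpow : ∀ t ∈ Ioi T, ENNReal.ofReal (t ^ (-2 : ℝ)) = (ENNReal.ofReal (t ^ 2))⁻¹ := by
    intro t ht
    have ht0 : 0 < t := hT.trans ht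
    rw [← ENNReal.ofReal_inv_of_pos (by positivity), Real.rpow_neg ht0.le, Real.rpow_two]
  rw [← setLIntegral_congr_fun measurableSet_Ioi hpow,
    ← ofReal_integral_eq_lintegral_ofReal (integrableOn_Ioi_rpow_of_lt (by norm_num) hT)
      ((ae_restrict_iff' measurableSet_Ioi).mpr (.of_forall fun t ht =>
        Real.rpow_nonneg (hT.trans ht).le _)),
    integral_Ioi_rpow_of_lt (by norm_num) hT, ← ENNReal.ofReal_inv_of_pos hT]
  norm_num [Real.rpow_neg_one]

lemma measure_ge_iSup_le_card_mul (hW : ∀ i, IdentDistrib (W i) (W i₀) μ μ) (t : ℝ) :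
    μ {ω | t ≤ ⨆ i, W i ω} ≤ Fintype.card ι * μ {ω | t ≤ W i₀ ω} := by
  have : Nonempty ι := ⟨i₀⟩
  have hsub : {ω | t ≤ ⨆ i, W i ω} ⊆ ⋃ i, {ω | t ≤ W i ω} := fun ω hω => by
    obtain ⟨i, hi⟩ := exists_eq_ciSup_of_finite (f := fun i => W i ω)
    exact mem_iUnion.2 ⟨i, hω.trans_eq hi.symm⟩
  calc μ {ω | t ≤ ⨆ i, W i ω} ≤ ∑ i, μ {ω | t ≤ W i ω} :=
        (measure_mono hsub).trans (measure_iUnion_fintype_le μ _)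
    _ = ∑ _i : ι, μ {ω | t ≤ W i₀ ω} :=
        Finset.sum_congr rfl fun i _ => (hW i).measure_mem_eq measurableSet_Ici
    _ = Fintype.card ι * μ {ω | t ≤ W i₀ ω} := by
        rw [Finset.sum_const, Finset.card_univ, nsmul_eq_mul]

lemma tailSup_iSup_le_card_mul (hW : ∀ i, IdentDistrib (W i) (W i₀) μ μ) (T : ℝ) :
    tailSup μ (fun ω => ⨆ i, W i ω) T ≤ Fintype.card ι * tailSup μ (W i₀) T :=
  iSup₂_le fun t ht =>
    calc ENNReal.ofReal (t ^ 2) * μ {ω | t ≤ ⨆ i, W i ω}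
        ≤ ENNReal.ofReal (t ^ 2) * (Fintype.card ι * μ {ω | t ≤ W i₀ ω}) :=
          mul_le_mul_right (measure_ge_iSup_le_card_mul hW t) _
      _ = Fintype.card ι * (ENNReal.ofReal (t ^ 2) * μ {ω | t ≤ W i₀ ω}) := mul_left_comm _ _ _
      _ ≤ Fintype.card ι * tailSup μ (W i₀) T :=
          mul_le_mul_right (le_tailSup ht) _

variable [IsProbabilityMeasure μ]

lemma lintegral_ofReal_le_add_tailSup_div {X : Ω → ℝ} (hX0 : 0 ≤ᵐ[μ] X) (hX : AEMeasurable X μ)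
    {T : ℝ} (hT : 0 < T) :
    ∫⁻ ω, ENNReal.ofReal (X ω) ∂μ ≤ ENNReal.ofReal T + tailSup μ X T / ENNReal.ofReal T := by
  have hbody : ∫⁻ t in Ioc 0 T, μ {ω | t ≤ X ω} ≤ ENNReal.ofReal T :=
    calc ∫⁻ t in Ioc 0 T, μ {ω | t ≤ X ω} ≤ ∫⁻ _ in Ioc 0 T, 1 :=
          lintegral_mono fun _ => prob_le_one
      _ = ENNReal.ofReal T := by simp [Real.volume_Ioc]
  have htail : ∫⁻ t in Ioi T, μ {ω | t ≤ X ω} ≤ tailSup μ X T / ENNReal.ofReal T :=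
    calc ∫⁻ t in Ioi T, μ {ω | t ≤ X ω}
        ≤ ∫⁻ t in Ioi T, tailSup μ X T * (ENNReal.ofReal (t ^ 2))⁻¹ :=
          setLIntegral_mono' measurableSet_Ioi fun _ ht => measure_ge_le_tailSup_div hT ht.le
      _ = tailSup μ X T / ENNReal.ofReal T := by
          rw [lintegral_const_mul _ (by fun_prop), lintegral_Ioi_inv_sq hT, div_eq_mul_inv]
  calc ∫⁻ ω, ENNReal.ofReal (X ω) ∂μ
      = ∫⁻ t in Ioi 0, μ {ω | t ≤ X ω} := lintegral_eq_lintegral_meas_le μ hX0 hX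
    _ = (∫⁻ t in Ioc 0 T, μ {ω | t ≤ X ω}) + ∫⁻ t in Ioi T, μ {ω | t ≤ X ω} := by
        rw [← lintegral_union measurableSet_Ioi (Ioc_disjoint_Ioi le_rfl),
          Ioc_union_Ioi_eq_Ioi hT.le]
    _ ≤ ENNReal.ofReal T + tailSup μ X T / ENNReal.ofReal T := add_le_add hbody htail

lemma lintegral_iSup_le_add_card_mul_tailSup_div (hW0 : ∀ i ω, 0 ≤ W i ω)
    (hW : ∀ i, IdentDistrib (W i) (W i₀) μ μ) {T : ℝ} (hT : 0 < T) :
    ∫⁻ ω, ENNReal.ofReal (⨆ i, W i ω) ∂μ ≤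
      ENNReal.ofReal T + Fintype.card ι * tailSup μ (W i₀) T / ENNReal.ofReal T := by
  have : Nonempty ι := ⟨i₀⟩
  have hmax0 : 0 ≤ᵐ[μ] fun ω => ⨆ i, W i ω :=
    .of_forall fun ω => (hW0 i₀ ω).trans (le_ciSup (finite_range fun i => W i ω).bddAbove i₀)
  calc ∫⁻ ω, ENNReal.ofReal (⨆ i, W i ω) ∂μ
      ≤ ENNReal.ofReal T + tailSup μ (fun ω => ⨆ i, W i ω) T / ENNReal.ofReal T :=
        lintegral_ofReal_le_add_tailSup_div hmax0
          (AEMeasurable.iSup fun i => (hW i).aemeasurable_fst) hT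
    _ ≤ ENNReal.ofReal T + Fintype.card ι * tailSup μ (W i₀) T / ENNReal.ofReal T := by
        gcongr; exact tailSup_iSup_le_card_mul hW T

end

theorem stmt_15_general {Ω : ℕ → Type*} [∀ n, MeasurableSpace (Ω n)]
    (μ : ∀ n, Measure (Ω n)) [∀ n, IsProbabilityMeasure (μ n)]
    (W : ∀ n, Fin n → Ω n → ℝ)
    (hnonneg : ∀ n i ω, 0 ≤ W n i ω)
    (hident : ∀ n (i j : Fin n), IdentDistrib (W n i) (W n j) (μ n) (μ n))
    (hcond : Tendsto (fun t0 : ℝ =>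
        Filter.limsup (fun n : ℕ =>
            ⨆ t ∈ Set.Ici t0, ENNReal.ofReal (t ^ 2) *
              μ (n + 1) {ω | t ≤ W (n + 1) ⟨0, Nat.succ_pos n⟩ ω})
          atTop) atTop (nhds 0)) :
    Tendsto (fun n : ℕ =>
        (∫⁻ ω, ENNReal.ofReal (⨆ i : Fin n, W n i ω) ∂(μ n)) / ENNReal.ofReal (Real.sqrt n))
      atTop (nhds 0) := by
  rw [← tendsto_add_atTop_iff_nat 1, ENNReal.tendsto_nhds_zero]
  intro ε hε
  obtain ⟨r, -, hr, hrε⟩ := ENNReal.lt_iff_exists_real_btwn.1 hε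
  have hη : 0 < r / 2 := half_pos (ENNReal.ofReal_pos.1 hr)
  obtain ⟨t₀, ht₀⟩ := (hcond.eventually_lt_const (ENNReal.ofReal_pos.2 (pow_pos hη 2))).exists
  have hT : Tendsto (fun n : ℕ => r / 2 * √((n + 1 : ℕ) : ℝ)) atTop atTop :=
    (Real.tendsto_sqrt_atTop.comp <| tendsto_natCast_atTop_atTop.comp <|
      tendsto_add_atTop_nat 1).const_mul_atTop hη
  filter_upwards [eventually_lt_of_limsup_lt ht₀, hT.eventually_ge_atTop t₀] with n hS ht₀n
  set T := r / 2 * √((n + 1 : ℕ) : ℝ)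
  have hST : tailSup (μ (n + 1)) (W (n + 1) 0) T ≤ ENNReal.ofReal ((r / 2) ^ 2) :=
    (tailSup_anti _ ht₀n).trans hS.le
  refine ENNReal.div_le_of_le_mul (le_trans ?_ (by gcongr : ENNReal.ofReal r * _ ≤ ε * _))
  calc ∫⁻ ω, ENNReal.ofReal (⨆ i, W (n + 1) i ω) ∂μ (n + 1)
      ≤ ENNReal.ofReal T +
          (n + 1 : ℕ) * tailSup (μ (n + 1)) (W (n + 1) 0) T / ENNReal.ofReal T := by
        simpa using lintegral_iSup_le_add_card_mul_tailSup_div (hnonneg (n + 1))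
          (fun i => hident (n + 1) i 0) (by positivity : 0 < T)
    _ ≤ ENNReal.ofReal T + ENNReal.ofReal T := by
        grw [hST, natCast_mul_ofReal_sq_div_ofReal_mul_sqrt hη n.succ_pos]
    _ = ENNReal.ofReal r * ENNReal.ofReal √((n + 1 : ℕ) : ℝ) := by
        rw [← ENNReal.ofReal_add (by positivity) (by positivity),
          ← ENNReal.ofReal_mul (by linarith)]
        congr 1
        ring

/-- Triangular array of nonnegative, rowwise identically distributed
(possibly dependent) weights `W_{n,1}, …, W_{n,n}`.  If
`lim_{t₀→∞} limsup_{n→∞} sup_{t ≥ t₀} t² P(W_{n,1} ≥ t) = 0`, then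
`n^{-1/2} E[max_{i ≤ n} W_{n,i}] → 0`. -/
theorem stmt_15 {Ω : ℕ → Type*} [∀ n, MeasurableSpace (Ω n)]
    (μ : ∀ n, Measure (Ω n)) [∀ n, IsProbabilityMeasure (μ n)]
    (W : ∀ n, Fin n → Ω n → ℝ)
    (hmeas : ∀ n i, Measurable (W n i))
    (hnonneg : ∀ n i ω, 0 ≤ W n i ω)
    (hident : ∀ n (i j : Fin n), IdentDistrib (W n i) (W n j) (μ n) (μ n))
    (hcond : Tendsto (fun t0 : ℝ =>
        Filter.limsup (fun n : ℕ =>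
            ⨆ t ∈ Set.Ici t0, ENNReal.ofReal (t ^ 2) *
              μ (n + 1) {ω | t ≤ W (n + 1) ⟨0, Nat.succ_pos n⟩ ω})
          atTop) atTop (nhds 0)) :
    Tendsto (fun n : ℕ =>
        (∫⁻ ω, ENNReal.ofReal (⨆ i : Fin n, W n i ω) ∂(μ n)) / ENNReal.ofReal (Real.sqrt n))
      atTop (nhds 0) :=
  stmt_15_general μ W hnonneg hident hcond
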